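/- arXiv:2008.09278 — 3 statements merged into one kernel-verified Lean document; each statement's English description precedes it below -/
import Mathlib

section
/- Let K be a *-subalgebra of M_n(ℂ) containing the identity, E : M_n(ℂ) → K the trace-preserving conditional expectation, ρ a positive definite matrix, and σ ∈ K positive definite. Then d^f(ρ‖σ) = d^f(ρ‖E(ρ)) + d^f(E(ρ)‖σ), where d^f is the Bregman relative entropy associated to a continuously differentiable f : (0,∞) → (0,∞). -/
open Matrix
open scoped ComplexOrder

lemma cfc_mem_starSubalgebra {n : ℕ}
    (K : StarSubalgebra ℂ (Matrix (Fin n) (Fin n) ℂ))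
    (g : ℝ → ℝ) (a : Matrix (Fin n) (Fin n) ℂ) (ha : a ∈ K) :
    cfc g a ∈ K := by
  by_cases hsa : _root_.IsSelfAdjoint a
  · by_cases hg : ContinuousOn g (spectrum ℝ a)
    · rw [cfc_apply g a hsa hg]
      have hKclosed : IsClosed (K : Set (Matrix (Fin n) (Fin n) ℂ)) := by
        have := (Subalgebra.toSubmodule K.toSubalgebra).closed_of_finiteDimensional
        exact this
      have key : ∀ φ : C(spectrum ℝ a, ℝ), cfcHom hsa φ ∈ K := by
        intro φ
        induction φ using ContinuousMap.induction_on_of_compact with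
        | const r =>
          have : (ContinuousMap.const (spectrum ℝ a) r)
              = algebraMap ℝ C(spectrum ℝ a, ℝ) r := rfl
          rw [this, AlgHomClass.commutes]
          have : algebraMap ℝ (Matrix (Fin n) (Fin n) ℂ) r
              = (algebraMap ℝ ℂ r) • (1 : Matrix (Fin n) (Fin n) ℂ) := by
            rw [Algebra.algebraMap_eq_smul_one, IsScalarTower.algebraMap_smul]
          rw [this]
          exact K.smul_mem K.one_mem _
        | id =>
          rw [cfcHom_id hsa]; exact ha
        | star_id =>
          rw [map_star, cfcHom_id hsa]; exact star_mem ha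
        | add f₁ f₂ h₁ h₂ =>
          rw [map_add]; exact add_mem h₁ h₂
        | mul f₁ f₂ h₁ h₂ =>
          rw [_root_.map_mul]; exact mul_mem h₁ h₂
        | frequently f hf =>
          have hcl : IsClosed ((cfcHom hsa (R := ℝ)) ⁻¹' (K : Set _)) :=
            hKclosed.preimage (cfcHom_isClosedEmbedding hsa).continuous
          have hmem : f ∈ closure (⇑(cfcHom hsa (R := ℝ)) ⁻¹' (K : Set _)) :=
            mem_closure_iff_frequently.mpr hf
          rwa [hcl.closure_eq] at hmem
      exact key _
    · rw [cfc_apply_of_not_continuousOn a hg]; exact zero_mem K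
  · rw [cfc_apply_of_not_predicate a hsa]; exact zero_mem K

/-- Bregman relative entropy `d^f(ρ‖σ) = tr(f(ρ) - f(σ) - (ρ - σ) f'(σ))`. -/
noncomputable def bregman {n : ℕ} (f f' : ℝ → ℝ) (ρ σ : Matrix (Fin n) (Fin n) ℂ) : ℂ :=
  Matrix.trace (cfc f ρ - cfc f σ - (ρ - σ) * cfc f' σ)

/-- martingale equality: for the trace-preserving conditional expectation `E`
onto a unital *-subalgebra `K`, positive definite `ρ`, and positive definite `σ ∈ K`,
`d^f(ρ‖σ) = d^f(ρ‖E(ρ)) + d^f(E(ρ)‖σ)`. -/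
theorem bregman_martingale_equality {n : ℕ}
    (K : StarSubalgebra ℂ (Matrix (Fin n) (Fin n) ℂ))
    (E : Matrix (Fin n) (Fin n) ℂ →ₗ[ℂ] Matrix (Fin n) (Fin n) ℂ)
    (hEmem : ∀ x, E x ∈ K)
    (hEfix : ∀ x ∈ K, E x = x)
    (hEtr : ∀ x, (E x).trace = x.trace)
    (hEadj : ∀ x y, (x * E y).trace = (E x * y).trace)
    (hEmod : ∀ a ∈ K, ∀ b ∈ K, ∀ x, E (a * x * b) = a * E x * b)
    (f f' : ℝ → ℝ)
    (hf_deriv : ∀ x ∈ Set.Ioi (0 : ℝ), HasDerivAt f (f' x) x)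
    (hf'_cont : ContinuousOn f' (Set.Ioi 0))
    (ρ σ : Matrix (Fin n) (Fin n) ℂ)
    (hρ : ρ.PosDef) (hσ : σ.PosDef) (hσK : σ ∈ K) :
    bregman f f' ρ σ = bregman f f' ρ (E ρ) + bregman f f' (E ρ) σ := by
  have key : ∀ x ∈ K, (ρ * x).trace = (E ρ * x).trace := by
    intro x hx
    have := hEadj ρ x
    rwa [hEfix x hx] at this
  have h1 : (ρ * cfc f' σ).trace = (E ρ * cfc f' σ).trace :=
    key _ (cfc_mem_starSubalgebra K f' σ hσK)
  have h2 : (ρ * cfc f' (E ρ)).trace = (E ρ * cfc f' (E ρ)).trace :=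
    key _ (cfc_mem_starSubalgebra K f' (E ρ) (hEmem ρ))
  simp only [bregman, Matrix.sub_mul, Matrix.trace_sub]
  rw [h1, h2]
  ring
end

section
/- Let E : M_n(ℂ) → K be a conditional expectation onto a unital *-subalgebra and f : (0,∞) → (0,∞) continuously differentiable. For positive definite ρ, the Fisher information of the generator I − E satisfies tr((ρ − E(ρ)) f'(ρ)) = d^f(ρ‖E(ρ)) + d^f(E(ρ)‖ρ). In particular, if f is convex, then d^f(ρ‖E(ρ)) ≤ tr((ρ − E(ρ)) f'(ρ)). -/
open Matrix
open scoped ComplexOrder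

theorem ConvexOn.add_sub_mul_le_of_hasDerivAt {s : Set ℝ} {f : ℝ → ℝ} {f' x y : ℝ}
    (hf : ConvexOn ℝ s f) (hx : x ∈ s) (hy : y ∈ s) (hf' : HasDerivAt f f' y) :
    f y + (x - y) * f' ≤ f x := by
  rcases lt_trichotomy x y with hxy | rfl | hxy
  · have := hf.slope_le_of_hasDerivAt hx hy hxy hf'
    rw [slope_def_field, div_le_iff₀ (sub_pos.mpr hxy)] at this
    linarith
  · simp
  · have := hf.le_slope_of_hasDerivAt hy hx hxy hf'
    rw [slope_def_field, le_div_iff₀ (sub_pos.mpr hxy)] at this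
    linarith

namespace Matrix

variable {𝕜 : Type*} [RCLike 𝕜] {ι : Type*} [Fintype ι]

theorem PosDef.trace_conjTranspose_mul_mul_pos {m : Type*} [Fintype m]
    {ρ : Matrix ι ι 𝕜} (hρ : ρ.PosDef) {B : Matrix ι m 𝕜} (hB : B ≠ 0) :
    0 < (Bᴴ * ρ * B).trace := by
  have hpsd := hρ.posSemidef.conjTranspose_mul_mul_same B
  refine hpsd.trace_nonneg.lt_of_ne' fun h => hB ?_
  have hzero := hpsd.trace_eq_zero_iff.mp h
  refine ext_iff_mulVec.mpr fun x => by_contra fun hx => ?_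
  rw [zero_mulVec] at hx
  have hpos : 0 < star x ⬝ᵥ (Bᴴ * ρ * B) *ᵥ x := by
    simpa only [star_mulVec, dotProduct_mulVec, vecMul_vecMul] using hρ.dotProduct_mulVec_pos hx
  simp [hzero] at hpos

variable [DecidableEq ι]

theorem eq_of_forall_trace_mul_eq (K : StarSubalgebra 𝕜 (Matrix ι ι 𝕜))
    {x y : Matrix ι ι 𝕜} (hx : x ∈ K) (hy : y ∈ K)
    (h : ∀ a ∈ K, (a * x).trace = (a * y).trace) : x = y := by
  rw [← sub_eq_zero, ← trace_conjTranspose_mul_self_eq_zero_iff, mul_sub, trace_sub,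
    h (x - y)ᴴ (star_mem (sub_mem hx hy)), sub_self]

theorem isHermitian_of_forall_trace_mul_eq (K : StarSubalgebra 𝕜 (Matrix ι ι 𝕜))
    {ρ σ : Matrix ι ι 𝕜} (hρ : ρ.IsHermitian) (hσ : σ ∈ K)
    (h : ∀ a ∈ K, (a * σ).trace = (a * ρ).trace) : σ.IsHermitian :=
  eq_of_forall_trace_mul_eq K (star_mem hσ) hσ fun a ha => by
    calc (a * σᴴ).trace = star (σ * aᴴ).trace := by
          rw [← trace_conjTranspose, conjTranspose_mul, conjTranspose_conjTranspose]
      _ = star (aᴴ * ρ).trace := by rw [trace_mul_comm, h aᴴ (star_mem ha)]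
      _ = (a * σ).trace := by
          rw [← trace_conjTranspose, conjTranspose_mul, conjTranspose_conjTranspose, hρ.eq,
            trace_mul_comm, h a ha]

theorem trace_diagonal_mul_mul_diagonal_mul_star (d e : ι → 𝕜)
    (M : Matrix ι ι 𝕜) :
    (diagonal d * M * diagonal e * star M).trace = ∑ i, ∑ j, d i * e j * (‖M i j‖ ^ 2 : ℝ) := by
  simp only [trace, diag, mul_apply, star_apply, diagonal_apply, ite_mul, zero_mul, mul_ite,
    mul_zero, Finset.sum_ite_eq, Finset.sum_ite_eq', Finset.mem_univ, if_true]
  refine Finset.sum_congr rfl fun i _ => Finset.sum_congr rfl fun j _ => ?_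
  rw [RCLike.ofReal_pow, ← RCLike.mul_conj, RCLike.star_def]
  ring

theorem continuousOn_spectrum (g : ℝ → ℝ) (A : Matrix ι ι 𝕜) :
    ContinuousOn g (spectrum ℝ A) :=
  finite_real_spectrum.continuousOn g

theorem cfc_mem_starSubalgebra (K : StarSubalgebra 𝕜 (Matrix ι ι 𝕜)) (g : ℝ → ℝ)
    {a : Matrix ι ι 𝕜} (ha : a ∈ K) : cfc g a ∈ K :=
  have : IsClosed (K : Set (Matrix ι ι 𝕜)) :=
    Submodule.closed_of_finiteDimensional (K.toSubalgebra.toSubmodule.restrictScalars 𝕜)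
  cfc_mem g ha

theorem IsHermitian.trace_cfc {A : Matrix ι ι 𝕜} (hA : A.IsHermitian) (g : ℝ → ℝ) :
    (cfc g A).trace = ∑ i, (g (hA.eigenvalues i) : 𝕜) := by
  rw [hA.cfc_eq, IsHermitian.cfc, Unitary.conjStarAlgAut_apply, trace_mul_cycle,
    Unitary.coe_star_mul_self, one_mul, trace_diagonal]
  rfl

theorem IsHermitian.trace_cfc_mul_cfc {A B : Matrix ι ι 𝕜} (hA : A.IsHermitian)
    (hB : B.IsHermitian) (g h : ℝ → ℝ) :
    (cfc g A * cfc h B).trace = ∑ i, ∑ j, (g (hA.eigenvalues i) * h (hB.eigenvalues j) *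
      ‖(star (hA.eigenvectorUnitary : Matrix ι ι 𝕜) * hB.eigenvectorUnitary) i j‖ ^ 2 : ℝ) := by
  set U := (hA.eigenvectorUnitary : Matrix ι ι 𝕜)
  set V := (hB.eigenvectorUnitary : Matrix ι ι 𝕜)
  rw [hA.cfc_eq, hB.cfc_eq, IsHermitian.cfc, IsHermitian.cfc, Unitary.conjStarAlgAut_apply,
    Unitary.conjStarAlgAut_apply]
  calc _ = (diagonal (RCLike.ofReal ∘ g ∘ hA.eigenvalues) * (star U * V) *
        diagonal (RCLike.ofReal ∘ h ∘ hB.eigenvalues) * star (star U * V)).trace := by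
        simp only [Matrix.mul_assoc]
        rw [trace_mul_comm U]
        simp only [star_mul, star_star, Matrix.mul_assoc]
        rfl
    _ = _ := by
      rw [trace_diagonal_mul_mul_diagonal_mul_star]
      push_cast
      rfl

theorem posDef_of_forall_trace_mul_eq (K : StarSubalgebra 𝕜 (Matrix ι ι 𝕜))
    {ρ σ : Matrix ι ι 𝕜} (hρ : ρ.PosDef) (hσ : σ ∈ K)
    (h : ∀ a ∈ K, (a * σ).trace = (a * ρ).trace) : σ.PosDef := by
  have hσH := isHermitian_of_forall_trace_mul_eq K hρ.isHermitian hσ h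
  refine hσH.posDef_iff_eigenvalues_pos.mpr fun i => not_le.mp fun hi => ?_
  set g : ℝ → ℝ := (Set.Iic 0).indicator 1
  set Q := cfc g σ
  have hQK : Q ∈ K := cfc_mem_starSubalgebra K g hσ
  have hQH : Qᴴ = Q := (cfc_predicate g σ).star_eq
  have hQ : Q ≠ 0 := fun hQ => by
    have := eqOn_of_cfc_eq_cfc (hQ.trans (cfc_zero ℝ σ).symm) (continuousOn_spectrum _ _)
      (continuousOn_spectrum _ _) hσH.isSelfAdjoint (hσH.eigenvalues_mem_spectrum_real i)
    simp [g, hi] at this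
  have hQQσ : Q * Q * σ = cfc (fun x => g x * g x * x) σ := by
    rw [cfc_mul _ _ σ (continuousOn_spectrum _ _) (continuousOn_spectrum _ _),
      cfc_mul _ _ σ (continuousOn_spectrum _ _) (continuousOn_spectrum _ _), cfc_id' ℝ σ]
  have hnonpos : RCLike.re (Q * Q * σ).trace ≤ 0 := by
    rw [hQQσ, hσH.trace_cfc, map_sum]
    refine Finset.sum_nonpos fun j _ => ?_
    by_cases hj : hσH.eigenvalues j ≤ 0 <;> simp [g, hj]
  have hpos : 0 < (Q * Q * σ).trace := by
    rw [h _ (mul_mem hQK hQK), trace_mul_cycle, trace_mul_cycle]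
    simpa only [hQH] using hρ.trace_conjTranspose_mul_mul_pos hQ
  exact hnonpos.not_gt (RCLike.pos_iff.mp hpos).1

end Matrix

theorem bregman_add_bregman {n : ℕ} (f f' : ℝ → ℝ) (ρ σ : Matrix (Fin n) (Fin n) ℂ) :
    bregman f f' ρ σ + bregman f f' σ ρ = ((ρ - σ) * (cfc f' ρ - cfc f' σ)).trace := by
  simp only [bregman, trace_sub, sub_mul, mul_sub]
  ring

theorem bregman_nonneg {n : ℕ} {s : Set ℝ} {f f' : ℝ → ℝ} (hf : ConvexOn ℝ s f)
    (hf' : ∀ x ∈ s, HasDerivAt f (f' x) x) {A B : Matrix (Fin n) (Fin n) ℂ}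
    (hA : A.IsHermitian) (hB : B.IsHermitian) (hAs : ∀ i, hA.eigenvalues i ∈ s)
    (hBs : ∀ i, hB.eigenvalues i ∈ s) : 0 ≤ bregman f f' A B := by
  obtain ⟨w, hw0, hw⟩ : ∃ w : Fin n → Fin n → ℝ, (∀ i j, 0 ≤ w i j) ∧
      ∀ g h : ℝ → ℝ, (cfc g A * cfc h B).trace =
        ∑ i, ∑ j, (g (hA.eigenvalues i) * h (hB.eigenvalues j) * w i j : ℝ) :=
    ⟨_, fun _ _ => by positivity, hA.trace_cfc_mul_cfc hB⟩
  have hfA := hw f 1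
  have hfB := hw 1 f
  have hAf'B := hw (fun x => x) f'
  have hBf'B := hw 1 (fun x => x * f' x)
  rw [cfc_one ℝ B hB.isSelfAdjoint, mul_one] at hfA
  rw [cfc_one ℝ A hA.isSelfAdjoint, one_mul] at hfB hBf'B
  rw [cfc_id' ℝ A hA.isSelfAdjoint] at hAf'B
  rw [cfc_mul (fun x => x) f' B (continuousOn_spectrum _ _) (continuousOn_spectrum _ _),
    cfc_id' ℝ B hB.isSelfAdjoint] at hBf'B
  have hsum : bregman f f' A B = ((∑ i, ∑ j, (f (hA.eigenvalues i) - f (hB.eigenvalues j) -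
      (hA.eigenvalues i - hB.eigenvalues j) * f' (hB.eigenvalues j)) * w i j : ℝ) : ℂ) := by
    rw [bregman, trace_sub, trace_sub, sub_mul, trace_sub, hfA, hfB, hAf'B, hBf'B]
    push_cast
    simp only [← Finset.sum_sub_distrib]
    refine Finset.sum_congr rfl fun i _ => Finset.sum_congr rfl fun j _ => ?_
    simp only [Pi.one_apply]
    push_cast
    ring
  rw [hsum, Complex.zero_le_real]
  refine Finset.sum_nonneg fun i _ => Finset.sum_nonneg fun j _ => mul_nonneg ?_ (hw0 i j)
  linarith [hf.add_sub_mul_le_of_hasDerivAt (hAs i) (hBs j) (hf' _ (hBs j))]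

theorem fisher_information_of_conditional_expectation_general {n : ℕ}
    (K : StarSubalgebra ℂ (Matrix (Fin n) (Fin n) ℂ))
    (E : Matrix (Fin n) (Fin n) ℂ →ₗ[ℂ] Matrix (Fin n) (Fin n) ℂ)
    (hEmem : ∀ x, E x ∈ K)
    (hEfix : ∀ x ∈ K, E x = x)
    (hEadj : ∀ x y, (x * E y).trace = (E x * y).trace)
    (f f' : ℝ → ℝ)
    (hf_conv : ConvexOn ℝ (Set.Ioi 0) f)
    (hf_deriv : ∀ x ∈ Set.Ioi (0 : ℝ), HasDerivAt f (f' x) x)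
    (ρ : Matrix (Fin n) (Fin n) ℂ) (hρ : ρ.PosDef) :
    Matrix.trace ((ρ - E ρ) * cfc f' ρ) =
        bregman f f' ρ (E ρ) + bregman f f' (E ρ) ρ ∧
      (bregman f f' ρ (E ρ)).re ≤ (Matrix.trace ((ρ - E ρ) * cfc f' ρ)).re := by
  set σ := E ρ
  have hσ : ∀ a ∈ K, (a * σ).trace = (a * ρ).trace := fun a ha => by rw [hEadj, hEfix a ha]
  have hσpos : σ.PosDef := posDef_of_forall_trace_mul_eq K hρ (hEmem ρ) hσ
  have hcross : ((ρ - σ) * cfc f' σ).trace = 0 := by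
    rw [trace_mul_comm, mul_sub, trace_sub, hσ _ (cfc_mem_starSubalgebra K f' (hEmem ρ)),
      sub_self]
  have hfisher : ((ρ - σ) * cfc f' ρ).trace = bregman f f' ρ σ + bregman f f' σ ρ := by
    rw [bregman_add_bregman, mul_sub, trace_sub, hcross, sub_zero]
  have hklein : 0 ≤ bregman f f' σ ρ :=
    bregman_nonneg hf_conv hf_deriv hσpos.isHermitian hρ.isHermitian hσpos.eigenvalues_pos
      hρ.eigenvalues_pos
  refine ⟨hfisher, ?_⟩
  rw [hfisher, Complex.add_re]
  linarith [(Complex.nonneg_iff.mp hklein).1]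

/-- for the conditional expectation `E` onto a unital *-subalgebra `K` and C¹ convex
`f : (0,∞) → (0,∞)`, the `f`-Fisher information of the generator `I - E` satisfies
`tr((ρ - E(ρ)) f'(ρ)) = d^f(ρ‖E(ρ)) + d^f(E(ρ)‖ρ)`; in particular (by convexity of `f`)
`d^f(ρ‖E(ρ)) ≤ tr((ρ - E(ρ)) f'(ρ))`. -/
theorem fisher_information_of_conditional_expectation {n : ℕ}
    (K : StarSubalgebra ℂ (Matrix (Fin n) (Fin n) ℂ))
    (E : Matrix (Fin n) (Fin n) ℂ →ₗ[ℂ] Matrix (Fin n) (Fin n) ℂ)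
    (hEmem : ∀ x, E x ∈ K)
    (hEfix : ∀ x ∈ K, E x = x)
    (hEtr : ∀ x, (E x).trace = x.trace)
    (hEadj : ∀ x y, (x * E y).trace = (E x * y).trace)
    (hEmod : ∀ a ∈ K, ∀ b ∈ K, ∀ x, E (a * x * b) = a * E x * b)
    (f f' : ℝ → ℝ)
    (hf_pos : ∀ x ∈ Set.Ioi (0 : ℝ), 0 < f x)
    (hf_conv : ConvexOn ℝ (Set.Ioi 0) f)
    (hf_deriv : ∀ x ∈ Set.Ioi (0 : ℝ), HasDerivAt f (f' x) x)
    (hf'_cont : ContinuousOn f' (Set.Ioi 0))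
    (ρ : Matrix (Fin n) (Fin n) ℂ) (hρ : ρ.PosDef) :
    Matrix.trace ((ρ - E ρ) * cfc f' ρ) =
        bregman f f' ρ (E ρ) + bregman f f' (E ρ) ρ ∧
      (bregman f f' ρ (E ρ)).re ≤ (Matrix.trace ((ρ - E ρ) * cfc f' ρ)).re :=
  fisher_information_of_conditional_expectation_general K E hEmem hEfix hEadj f f' hf_conv hf_deriv
    ρ hρ
end

section
/- Suppose F : (0,∞)² → (0,∞) satisfies the monotonicity property β* Q_F^{β(ρ),β(σ)} β ≤ Q_F^{ρ,σ} for all CPTP maps β and positive definite ρ,σ, and additionally λF(λx, λy) ≤ F(x,y) for all λ ∈ [0,1] and x,y > 0. Then the generalized monotone metric γ^F_{ρ,σ}(a,a) := ⟨a, Q_F^{ρ,σ}(a)⟩_{HS} is jointly convex in (ρ, σ, a): γ^F_{λρ₁+(1−λ)ρ₂, λσ₁+(1−λ)σ₂}(λa₁+(1−λ)a₂, ·) ≤ λγ^F_{ρ₁,σ₁}(a₁,a₁) + (1−λ)γ^F_{ρ₂,σ₂}(a₂,a₂). -/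
open Matrix
open scoped ComplexOrder

/-- The spectral projection of a Hermitian matrix onto the `i`-th eigenvector. -/
noncomputable def specProj {n : ℕ} {A : Matrix (Fin n) (Fin n) ℂ} (hA : A.IsHermitian)
    (i : Fin n) : Matrix (Fin n) (Fin n) ℂ :=
  (hA.eigenvectorUnitary : Matrix (Fin n) (Fin n) ℂ) *
    Matrix.diagonal (fun k => if k = i then (1 : ℂ) else 0) *
    star (hA.eigenvectorUnitary : Matrix (Fin n) (Fin n) ℂ)

/-- The Schur multiplier `Q_F^{ρ,σ}(y) = ∑_{i,j} F(sᵢ,tⱼ) pᵢ y qⱼ` associated with the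
spectral decompositions of the Hermitian matrices `ρ`, `σ` (junk value `0` otherwise). -/
noncomputable def QF {n : ℕ} (F : ℝ → ℝ → ℝ) (ρ σ : Matrix (Fin n) (Fin n) ℂ)
    (y : Matrix (Fin n) (Fin n) ℂ) : Matrix (Fin n) (Fin n) ℂ :=
  if h : ρ.IsHermitian ∧ σ.IsHermitian then
    ∑ i, ∑ j, ((F (h.1.eigenvalues i) (h.2.eigenvalues j) : ℝ) : ℂ) •
      (specProj h.1 i * y * specProj h.2 j)
  else 0

/-- The amplification `id_{M_k} ⊗ β` of a linear map `β` on matrix algebras. -/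
def amplify {n m : ℕ} (β : Matrix (Fin n) (Fin n) ℂ →ₗ[ℂ] Matrix (Fin m) (Fin m) ℂ) (k : ℕ)
    (x : Matrix (Fin k × Fin n) (Fin k × Fin n) ℂ) :
    Matrix (Fin k × Fin m) (Fin k × Fin m) ℂ :=
  Matrix.of fun p q => β (Matrix.of fun a b => x (p.1, a) (q.1, b)) p.2 q.2

/-- A linear map between matrix algebras is CPTP if it is trace preserving and all its
amplifications preserve positive semidefiniteness. -/
def IsCPTP {n m : ℕ} (β : Matrix (Fin n) (Fin n) ℂ →ₗ[ℂ] Matrix (Fin m) (Fin m) ℂ) : Prop :=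
  (∀ x, (β x).trace = x.trace) ∧
  ∀ (k : ℕ) (x : Matrix (Fin k × Fin n) (Fin k × Fin n) ℂ), x.PosSemidef →
    (amplify β k x).PosSemidef

/-- The generalized monotone metric `γ^F_{ρ,σ}(a,a) = ⟨a, Q_F^{ρ,σ}(a)⟩_{HS}`. -/
noncomputable def gammaF {n : ℕ} (F : ℝ → ℝ → ℝ) (ρ σ a : Matrix (Fin n) (Fin n) ℂ) : ℝ :=
  ((star a * QF F ρ σ a).trace).re

/-! By the spectral theorem, `γ^F_{ρ,σ}(a,a) = ∑ᵢⱼ F(sᵢ,tⱼ) |(u* a w)ᵢⱼ|²` for any unitary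
diagonalizations `ρ = u diag(s) u*`, `σ = w diag(t) w*`. Hence `γ^F` is additive on block-diagonal
triples, and the homogeneity bound on `F` gives `γ^F_{λρ,λσ}(λa,λa) ≤ λ γ^F_{ρ,σ}(a,a)`.
Applying the monotonicity to the CPTP map `β(x) = x₁₁ + x₂₂` at the block-diagonal triple
`diag(λρ₁, (1-λ)ρ₂)`, `diag(λσ₁, (1-λ)σ₂)`, `diag(λa₁, (1-λ)a₂)` then yields joint convexity. -/

open Polynomial Unitary

namespace Matrix

section SpectralSum

variable {m : Type*} [Fintype m] [DecidableEq m]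

def colProj (u : unitaryGroup m ℂ) (i : m) : Matrix m m ℂ :=
  conjStarAlgAut ℂ _ u (single i i 1)

lemma sum_smul_colProj (u : unitaryGroup m ℂ) (c : m → ℂ) :
    ∑ i, c i • colProj u i = conjStarAlgAut ℂ _ u (diagonal c) := by
  simp only [colProj, ← map_smul, ← map_sum, smul_single, smul_eq_mul, mul_one,
    sum_single_eq_diagonal]

lemma aeval_conjStarAlgAut_diagonal (u : unitaryGroup m ℂ) (d : m → ℂ) (p : ℂ[X]) :
    aeval (conjStarAlgAut ℂ _ u (diagonal d)) p =
      conjStarAlgAut ℂ _ u (diagonal fun i => p.eval (d i)) := by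
  rw [aeval_algHom_apply, show diagonal d = diagonalAlgHom ℂ d from rfl, aeval_algHom_apply,
    aeval_pi_apply]
  rfl

/-- Both sums are `p(A)` for the common matrix `A`, where `p` interpolates `g` on the two
spectra. -/
lemma sum_smul_colProj_eq_of_conj_eq {u w : unitaryGroup m ℂ} {s t : m → ℂ}
    (h : conjStarAlgAut ℂ _ u (diagonal s) = conjStarAlgAut ℂ _ w (diagonal t)) (g : ℂ → ℂ) :
    ∑ i, g (s i) • colProj u i = ∑ i, g (t i) • colProj w i := by
  classical
  set p := Lagrange.interpolate (Finset.univ.image s ∪ Finset.univ.image t) id g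
  have hp : ∀ z ∈ Set.range s ∪ Set.range t, p.eval z = g z := fun z hz =>
    Lagrange.eval_interpolate_at_node (r := g) Function.injective_id.injOn (by simpa using hz)
  calc ∑ i, g (s i) • colProj u i = aeval (conjStarAlgAut ℂ _ u (diagonal s)) p := by
        rw [sum_smul_colProj, aeval_conjStarAlgAut_diagonal]
        simp only [hp _ (Or.inl (Set.mem_range_self _))]
    _ = ∑ i, g (t i) • colProj w i := by
        rw [h, sum_smul_colProj, aeval_conjStarAlgAut_diagonal]
        simp only [hp _ (Or.inr (Set.mem_range_self _))]

lemma isHermitian_conjStarAlgAut_diagonal_ofReal (u : unitaryGroup m ℂ) (s : m → ℝ) :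
    (conjStarAlgAut ℂ _ u (diagonal ((↑) ∘ s))).IsHermitian :=
  IsSelfAdjoint.map (show IsSelfAdjoint (diagonal ((↑) ∘ s : m → ℂ)) from
    isHermitian_diagonal_of_self_adjoint _ (funext fun i => Complex.conj_ofReal (s i))) _

lemma IsHermitian.conjStarAlgAut_eigenvectorUnitary {A : Matrix m m ℂ} (hA : A.IsHermitian) :
    conjStarAlgAut ℂ _ hA.eigenvectorUnitary (diagonal ((↑) ∘ hA.eigenvalues)) = A :=
  hA.spectral_theorem.symm

lemma IsHermitian.conjStarAlgAut_eigenvectorUnitary_smul {A : Matrix m m ℂ}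
    (hA : A.IsHermitian) (r : ℝ) :
    conjStarAlgAut ℂ _ hA.eigenvectorUnitary (diagonal ((↑) ∘ (r • hA.eigenvalues))) =
      (r : ℂ) • A := by
  conv_rhs => rw [← hA.conjStarAlgAut_eigenvectorUnitary]
  rw [← map_smul, ← diagonal_smul]
  congr
  ext i
  simp

lemma trace_star_mul_colProj_mul_mul_colProj (u w : unitaryGroup m ℂ) (a : Matrix m m ℂ)
    (i j : m) :
    (star a * (colProj u i * a * colProj w j)).trace =
      Complex.normSq ((star (u : Matrix m m ℂ) * a * w) i j) := by
  set b := star (u : Matrix m m ℂ) * a * w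
  have hb : star a * (colProj u i * a * colProj w j) =
      star a * (u : Matrix m m ℂ) * (single i i 1 * b * single j j 1) *
        star (w : Matrix m m ℂ) := by
    simp only [colProj, conjStarAlgAut_apply, b, Matrix.mul_assoc]
  have hb_star : star (w : Matrix m m ℂ) * (star a * (u : Matrix m m ℂ)) = star b := by
    simp only [b, star_mul, star_star, Matrix.mul_assoc]
  rw [hb, trace_mul_cycle, hb_star, single_mul_mul_single, trace_mul_single]
  simp [b, Complex.normSq_eq_conj_mul_self]

end SpectralSum

section BlockDiag

variable {α : Type*} {m n : ℕ}

def blockDiag₂ [Zero α] (A : Matrix (Fin m) (Fin m) α) (B : Matrix (Fin n) (Fin n) α) :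
    Matrix (Fin (m + n)) (Fin (m + n)) α :=
  reindex finSumFinEquiv finSumFinEquiv (fromBlocks A 0 0 B)

section Entries

variable [Zero α] (A : Matrix (Fin m) (Fin m) α) (B : Matrix (Fin n) (Fin n) α)

@[simp] lemma blockDiag₂_castAdd_castAdd (i j : Fin m) :
    blockDiag₂ A B (Fin.castAdd n i) (Fin.castAdd n j) = A i j := by
  simp [blockDiag₂]

@[simp] lemma blockDiag₂_castAdd_natAdd (i : Fin m) (j : Fin n) :
    blockDiag₂ A B (Fin.castAdd n i) (Fin.natAdd m j) = 0 := by
  simp [blockDiag₂]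

@[simp] lemma blockDiag₂_natAdd_castAdd (i : Fin n) (j : Fin m) :
    blockDiag₂ A B (Fin.natAdd m i) (Fin.castAdd n j) = 0 := by
  simp [blockDiag₂]

@[simp] lemma blockDiag₂_natAdd_natAdd (i j : Fin n) :
    blockDiag₂ A B (Fin.natAdd m i) (Fin.natAdd m j) = B i j := by
  simp [blockDiag₂]

end Entries

lemma blockDiag₂_mul [NonUnitalNonAssocSemiring α] (A C : Matrix (Fin m) (Fin m) α)
    (B D : Matrix (Fin n) (Fin n) α) :
    blockDiag₂ A B * blockDiag₂ C D = blockDiag₂ (A * C) (B * D) := by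
  simp [blockDiag₂, fromBlocks_multiply]

lemma star_blockDiag₂ [AddMonoid α] [StarAddMonoid α] (A : Matrix (Fin m) (Fin m) α)
    (B : Matrix (Fin n) (Fin n) α) : star (blockDiag₂ A B) = blockDiag₂ (star A) (star B) := by
  simp [blockDiag₂, star_eq_conjTranspose, fromBlocks_conjTranspose]

lemma blockDiag₂_one [Zero α] [One α] :
    blockDiag₂ (1 : Matrix (Fin m) (Fin m) α) (1 : Matrix (Fin n) (Fin n) α) = 1 := by
  simp [blockDiag₂, fromBlocks_one]

lemma blockDiag₂_diagonal [Zero α] (d : Fin m → α) (e : Fin n → α) :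
    blockDiag₂ (diagonal d) (diagonal e) = diagonal (Fin.append d e) := by
  ext i j
  refine Fin.addCases (fun i => ?_) (fun i => ?_) i <;>
    refine Fin.addCases (fun j => ?_) (fun j => ?_) j <;>
    simp [diagonal_apply, Fin.ext_iff] <;> omega

def blockDiag₂Unitary (u : unitaryGroup (Fin m) ℂ) (v : unitaryGroup (Fin n) ℂ) :
    unitaryGroup (Fin (m + n)) ℂ :=
  ⟨blockDiag₂ u v, mem_unitaryGroup_iff.2 <| by
    rw [star_blockDiag₂, blockDiag₂_mul, mem_unitaryGroup_iff.1 u.2, mem_unitaryGroup_iff.1 v.2,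
      blockDiag₂_one]⟩

lemma conjStarAlgAut_blockDiag₂ (u : unitaryGroup (Fin m) ℂ) (v : unitaryGroup (Fin n) ℂ)
    (A : Matrix (Fin m) (Fin m) ℂ) (B : Matrix (Fin n) (Fin n) ℂ) :
    conjStarAlgAut ℂ _ (blockDiag₂Unitary u v) (blockDiag₂ A B) =
      blockDiag₂ (conjStarAlgAut ℂ _ u A) (conjStarAlgAut ℂ _ v B) := by
  simp [blockDiag₂Unitary, star_blockDiag₂, blockDiag₂_mul]

lemma PosDef.fromBlocks_zero_zero {l k R : Type*} [Fintype l] [Fintype k] [CommRing R]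
    [PartialOrder R] [StarRing R] [IsOrderedAddMonoid R] {A : Matrix l l R} {D : Matrix k k R}
    (hA : A.PosDef) (hD : D.PosDef) : (fromBlocks A 0 0 D).PosDef := by
  refine .of_dotProduct_mulVec_pos (hA.1.fromBlocks (by simp) hD.1) fun x hx => ?_
  rw [← Sum.elim_comp_inl_inr x, fromBlocks_mulVec]
  simp only [zero_mulVec, add_zero, zero_add, Sum.elim_comp_inl, Sum.elim_comp_inr,
    Function.star_sumElim, sumElim_dotProduct_sumElim]
  by_cases hl : x ∘ Sum.inl = 0
  · have hr : x ∘ Sum.inr ≠ 0 := fun hr => hx (by rw [← Sum.elim_comp_inl_inr x, hl, hr]; simp)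
    exact add_pos_of_nonneg_of_pos (hA.posSemidef.dotProduct_mulVec_nonneg _)
      (hD.dotProduct_mulVec_pos hr)
  · exact add_pos_of_pos_of_nonneg (hA.dotProduct_mulVec_pos hl)
      (hD.posSemidef.dotProduct_mulVec_nonneg _)

lemma PosDef.blockDiag₂ {R : Type*} [CommRing R] [PartialOrder R] [StarRing R]
    [IsOrderedAddMonoid R] {A : Matrix (Fin m) (Fin m) R} {B : Matrix (Fin n) (Fin n) R}
    (hA : A.PosDef) (hB : B.PosDef) : (blockDiag₂ A B).PosDef :=
  (hA.fromBlocks_zero_zero hB).submatrix finSumFinEquiv.symm.injective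

end BlockDiag

section BlockTrace

variable {R : Type*} [CommSemiring R] {n : ℕ}

variable (R n) in
def blockTrace : Matrix (Fin (n + n)) (Fin (n + n)) R →ₗ[R] Matrix (Fin n) (Fin n) R where
  toFun x :=
    x.submatrix (Fin.castAdd n) (Fin.castAdd n) + x.submatrix (Fin.natAdd n) (Fin.natAdd n)
  map_add' x y := by ext; simp [add_add_add_comm]
  map_smul' c x := by ext; simp [mul_add]

lemma blockTrace_apply (x : Matrix (Fin (n + n)) (Fin (n + n)) R) :
    blockTrace R n x =
      x.submatrix (Fin.castAdd n) (Fin.castAdd n) + x.submatrix (Fin.natAdd n) (Fin.natAdd n) :=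
  rfl

lemma blockTrace_blockDiag₂ (A B : Matrix (Fin n) (Fin n) R) :
    blockTrace R n (blockDiag₂ A B) = A + B := by
  ext i j
  simp only [blockTrace_apply, add_apply, submatrix_apply, blockDiag₂_castAdd_castAdd,
    blockDiag₂_natAdd_natAdd]

lemma trace_blockTrace (x : Matrix (Fin (n + n)) (Fin (n + n)) R) :
    (blockTrace R n x).trace = x.trace := by
  simp [blockTrace_apply, trace, Fin.sum_univ_add, Finset.sum_add_distrib]

end BlockTrace

end Matrix

open Matrix

lemma specProj_eq_colProj {n : ℕ} {A : Matrix (Fin n) (Fin n) ℂ} (hA : A.IsHermitian)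
    (i : Fin n) : specProj hA i = colProj hA.eigenvectorUnitary i := by
  rw [specProj, colProj, conjStarAlgAut_apply, ← diagonal_single]
  congr
  ext k
  simp [Pi.single_apply]

lemma QF_eq_sum_colProj {n : ℕ} (F : ℝ → ℝ → ℝ) {ρ σ : Matrix (Fin n) (Fin n) ℂ}
    {u w : unitaryGroup (Fin n) ℂ} {s t : Fin n → ℝ}
    (hρ : conjStarAlgAut ℂ _ u (diagonal ((↑) ∘ s)) = ρ)
    (hσ : conjStarAlgAut ℂ _ w (diagonal ((↑) ∘ t)) = σ) (a : Matrix (Fin n) (Fin n) ℂ) :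
    QF F ρ σ a = ∑ i, ∑ j, (F (s i) (t j) : ℂ) • (colProj u i * a * colProj w j) := by
  have hρH : ρ.IsHermitian := hρ ▸ isHermitian_conjStarAlgAut_diagonal_ofReal u s
  have hσH : σ.IsHermitian := hσ ▸ isHermitian_conjStarAlgAut_diagonal_ofReal w t
  have hrow : ∀ y, ∑ i, (F (hρH.eigenvalues i) y : ℂ) • colProj hρH.eigenvectorUnitary i =
      ∑ i, (F (s i) y : ℂ) • colProj u i := fun y => by
    simpa using sum_smul_colProj_eq_of_conj_eq
      (hρH.conjStarAlgAut_eigenvectorUnitary.trans hρ.symm) (fun z => (F z.re y : ℂ))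
  have hcol : ∀ x, ∑ j, (F x (hσH.eigenvalues j) : ℂ) • colProj hσH.eigenvectorUnitary j =
      ∑ j, (F x (t j) : ℂ) • colProj w j := fun x => by
    simpa using sum_smul_colProj_eq_of_conj_eq
      (hσH.conjStarAlgAut_eigenvectorUnitary.trans hσ.symm) (fun z => (F x z.re : ℂ))
  rw [QF, dif_pos ⟨hρH, hσH⟩]
  simp only [specProj_eq_colProj]
  calc _ = ∑ j, (∑ i, (F (hρH.eigenvalues i) (hσH.eigenvalues j) : ℂ) •
          colProj hρH.eigenvectorUnitary i) * a * colProj hσH.eigenvectorUnitary j := by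
        simp only [Finset.sum_mul, smul_mul_assoc]
        exact Finset.sum_comm
    _ = ∑ i, colProj u i * a * ∑ j, (F (s i) (hσH.eigenvalues j) : ℂ) •
          colProj hσH.eigenvectorUnitary j := by
        simp only [hrow, Finset.sum_mul, Finset.mul_sum, smul_mul_assoc, mul_smul_comm]
        exact Finset.sum_comm
    _ = _ := by simp only [hcol, Finset.mul_sum, mul_smul_comm]

lemma gammaF_eq_sum_normSq {n : ℕ} (F : ℝ → ℝ → ℝ) {ρ σ : Matrix (Fin n) (Fin n) ℂ}
    {u w : unitaryGroup (Fin n) ℂ} {s t : Fin n → ℝ}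
    (hρ : conjStarAlgAut ℂ _ u (diagonal ((↑) ∘ s)) = ρ)
    (hσ : conjStarAlgAut ℂ _ w (diagonal ((↑) ∘ t)) = σ) (a : Matrix (Fin n) (Fin n) ℂ) :
    gammaF F ρ σ a = ∑ i, ∑ j,
      F (s i) (t j) * Complex.normSq ((star (u : Matrix (Fin n) (Fin n) ℂ) * a * w) i j) := by
  simp only [gammaF, QF_eq_sum_colProj F hρ hσ, Finset.mul_sum, mul_smul_comm, trace_sum,
    trace_smul, trace_star_mul_colProj_mul_mul_colProj, Complex.re_sum, smul_eq_mul,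
    ← Complex.ofReal_mul, Complex.ofReal_re]

lemma gammaF_smul_le {n : ℕ} {F : ℝ → ℝ → ℝ} {lam : ℝ} (hlam : 0 ≤ lam)
    (hF : ∀ x > 0, ∀ y > 0, lam * F (lam * x) (lam * y) ≤ F x y)
    {ρ σ : Matrix (Fin n) (Fin n) ℂ} (hρ : ρ.PosDef) (hσ : σ.PosDef)
    (a : Matrix (Fin n) (Fin n) ℂ) :
    gammaF F ((lam : ℂ) • ρ) ((lam : ℂ) • σ) ((lam : ℂ) • a) ≤ lam * gammaF F ρ σ a := by
  rw [gammaF_eq_sum_normSq F (hρ.1.conjStarAlgAut_eigenvectorUnitary_smul lam)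
      (hσ.1.conjStarAlgAut_eigenvectorUnitary_smul lam),
    gammaF_eq_sum_normSq F hρ.1.conjStarAlgAut_eigenvectorUnitary
      hσ.1.conjStarAlgAut_eigenvectorUnitary]
  set b := star (hρ.1.eigenvectorUnitary : Matrix (Fin n) (Fin n) ℂ) * a *
    hσ.1.eigenvectorUnitary
  simp only [Finset.mul_sum, Matrix.mul_smul, Matrix.smul_mul, Matrix.smul_apply, smul_eq_mul,
    Complex.normSq_mul, Complex.normSq_ofReal, Pi.smul_apply]
  refine Finset.sum_le_sum fun i _ => Finset.sum_le_sum fun j _ => ?_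
  have hFij := hF _ (hρ.eigenvalues_pos i) _ (hσ.eigenvalues_pos j)
  nlinarith [mul_le_mul_of_nonneg_left hFij (mul_nonneg hlam (Complex.normSq_nonneg (b i j)))]

lemma gammaF_blockDiag₂ (F : ℝ → ℝ → ℝ) {m n : ℕ} {ρ₁ σ₁ : Matrix (Fin m) (Fin m) ℂ}
    {ρ₂ σ₂ : Matrix (Fin n) (Fin n) ℂ} (hρ₁ : ρ₁.IsHermitian) (hσ₁ : σ₁.IsHermitian)
    (hρ₂ : ρ₂.IsHermitian) (hσ₂ : σ₂.IsHermitian) (a₁ : Matrix (Fin m) (Fin m) ℂ)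
    (a₂ : Matrix (Fin n) (Fin n) ℂ) :
    gammaF F (blockDiag₂ ρ₁ ρ₂) (blockDiag₂ σ₁ σ₂) (blockDiag₂ a₁ a₂) =
      gammaF F ρ₁ σ₁ a₁ + gammaF F ρ₂ σ₂ a₂ := by
  have hdiag : ∀ {A : Matrix (Fin m) (Fin m) ℂ} {B : Matrix (Fin n) (Fin n) ℂ}
      (hA : A.IsHermitian) (hB : B.IsHermitian),
      conjStarAlgAut ℂ _ (blockDiag₂Unitary hA.eigenvectorUnitary hB.eigenvectorUnitary)
        (diagonal ((↑) ∘ Fin.append hA.eigenvalues hB.eigenvalues)) = blockDiag₂ A B := by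
    intro A B hA hB
    have happend : ((↑) ∘ Fin.append hA.eigenvalues hB.eigenvalues : Fin (m + n) → ℂ) =
        Fin.append ((↑) ∘ hA.eigenvalues) ((↑) ∘ hB.eigenvalues) := by
      ext i
      refine Fin.addCases (fun i => ?_) (fun i => ?_) i <;> simp
    rw [happend, ← blockDiag₂_diagonal, conjStarAlgAut_blockDiag₂,
      hA.conjStarAlgAut_eigenvectorUnitary, hB.conjStarAlgAut_eigenvectorUnitary]
  rw [gammaF_eq_sum_normSq F (hdiag hρ₁ hρ₂) (hdiag hσ₁ hσ₂),
    gammaF_eq_sum_normSq F hρ₁.conjStarAlgAut_eigenvectorUnitary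
      hσ₁.conjStarAlgAut_eigenvectorUnitary,
    gammaF_eq_sum_normSq F hρ₂.conjStarAlgAut_eigenvectorUnitary
      hσ₂.conjStarAlgAut_eigenvectorUnitary]
  simp [blockDiag₂Unitary, star_blockDiag₂, blockDiag₂_mul, Fin.sum_univ_add]

lemma amplify_blockTrace {n k : ℕ}
    (x : Matrix (Fin k × Fin (n + n)) (Fin k × Fin (n + n)) ℂ) :
    amplify (blockTrace ℂ n) k x =
      x.submatrix (Prod.map id (Fin.castAdd n)) (Prod.map id (Fin.castAdd n)) +
        x.submatrix (Prod.map id (Fin.natAdd n)) (Prod.map id (Fin.natAdd n)) :=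
  rfl

lemma isCPTP_blockTrace (n : ℕ) : IsCPTP (blockTrace ℂ n) :=
  ⟨trace_blockTrace, fun k x hx => by
    rw [amplify_blockTrace]
    exact (hx.submatrix _).add (hx.submatrix _)⟩

theorem gammaF_jointly_convex_general (F : ℝ → ℝ → ℝ)
    (hmono : ∀ (n m : ℕ)
      (β : Matrix (Fin n) (Fin n) ℂ →ₗ[ℂ] Matrix (Fin m) (Fin m) ℂ),
      IsCPTP β →
      ∀ (ρ σ : Matrix (Fin n) (Fin n) ℂ), ρ.PosDef → σ.PosDef →
      ∀ y : Matrix (Fin n) (Fin n) ℂ,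
        ((star (β y) * QF F (β ρ) (β σ) (β y)).trace).re ≤
          ((star y * QF F ρ σ y).trace).re)
    (hhom : ∀ lam ∈ Set.Icc (0 : ℝ) 1, ∀ x > (0 : ℝ), ∀ y > (0 : ℝ),
      lam * F (lam * x) (lam * y) ≤ F x y) :
    ∀ (n : ℕ) (ρ₁ ρ₂ σ₁ σ₂ a₁ a₂ : Matrix (Fin n) (Fin n) ℂ),
      ρ₁.PosDef → ρ₂.PosDef → σ₁.PosDef → σ₂.PosDef →
      ∀ lam ∈ Set.Icc (0 : ℝ) 1,
        gammaF F ((lam : ℂ) • ρ₁ + ((1 - lam : ℝ) : ℂ) • ρ₂)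
            ((lam : ℂ) • σ₁ + ((1 - lam : ℝ) : ℂ) • σ₂)
            ((lam : ℂ) • a₁ + ((1 - lam : ℝ) : ℂ) • a₂) ≤
          lam * gammaF F ρ₁ σ₁ a₁ + (1 - lam) * gammaF F ρ₂ σ₂ a₂ := by
  intro n ρ₁ ρ₂ σ₁ σ₂ a₁ a₂ hρ₁ hρ₂ hσ₁ hσ₂ lam ⟨hl0, hl1⟩
  obtain rfl | hl0 := hl0.eq_or_lt
  · simp
  obtain rfl | hl1 := hl1.eq_or_lt
  · simp
  have hμ : 0 < 1 - lam := sub_pos.2 hl1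
  have hpos : ∀ {A : Matrix (Fin n) (Fin n) ℂ} {r : ℝ}, A.PosDef → 0 < r → ((r : ℂ) • A).PosDef :=
    fun hA hr => hA.smul (Complex.zero_lt_real.2 hr)
  have hβ := hmono _ _ _ (isCPTP_blockTrace n) _ _
    ((hpos hρ₁ hl0).blockDiag₂ (hpos hρ₂ hμ)) ((hpos hσ₁ hl0).blockDiag₂ (hpos hσ₂ hμ))
    (blockDiag₂ ((lam : ℂ) • a₁) (((1 - lam : ℝ) : ℂ) • a₂))
  simp only [blockTrace_blockDiag₂] at hβ
  refine hβ.trans <| (gammaF_blockDiag₂ F (hpos hρ₁ hl0).1 (hpos hσ₁ hl0).1 (hpos hρ₂ hμ).1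
    (hpos hσ₂ hμ).1 _ _).trans_le <| add_le_add ?_ ?_
  · exact gammaF_smul_le hl0.le (hhom lam ⟨hl0.le, hl1.le⟩) hρ₁ hσ₁ a₁
  · exact gammaF_smul_le hμ.le (hhom (1 - lam) ⟨hμ.le, by linarith⟩) hρ₂ hσ₂ a₂

/-- if `F : (0,∞)² → (0,∞)` satisfies the monotonicity
`β* Q_F^{β(ρ),β(σ)} β ≤ Q_F^{ρ,σ}` for all CPTP `β` and the homogeneity bound
`λF(λx,λy) ≤ F(x,y)` for `λ ∈ [0,1]`, then the generalized monotone metric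
`γ^F_{ρ,σ}(a,a) = ⟨a, Q_F^{ρ,σ}(a)⟩_{HS}` is jointly convex in `(ρ, σ, a)`. -/
theorem gammaF_jointly_convex (F : ℝ → ℝ → ℝ)
    (hFpos : ∀ x ∈ Set.Ioi (0 : ℝ), ∀ y ∈ Set.Ioi (0 : ℝ), 0 < F x y)
    (hmono : ∀ (n m : ℕ)
      (β : Matrix (Fin n) (Fin n) ℂ →ₗ[ℂ] Matrix (Fin m) (Fin m) ℂ),
      IsCPTP β →
      ∀ (ρ σ : Matrix (Fin n) (Fin n) ℂ), ρ.PosDef → σ.PosDef →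
      ∀ y : Matrix (Fin n) (Fin n) ℂ,
        ((star (β y) * QF F (β ρ) (β σ) (β y)).trace).re ≤
          ((star y * QF F ρ σ y).trace).re)
    (hhom : ∀ lam ∈ Set.Icc (0 : ℝ) 1, ∀ x > (0 : ℝ), ∀ y > (0 : ℝ),
      lam * F (lam * x) (lam * y) ≤ F x y) :
    ∀ (n : ℕ) (ρ₁ ρ₂ σ₁ σ₂ a₁ a₂ : Matrix (Fin n) (Fin n) ℂ),
      ρ₁.PosDef → ρ₂.PosDef → σ₁.PosDef → σ₂.PosDef →
      ∀ lam ∈ Set.Icc (0 : ℝ) 1,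
        gammaF F ((lam : ℂ) • ρ₁ + ((1 - lam : ℝ) : ℂ) • ρ₂)
            ((lam : ℂ) • σ₁ + ((1 - lam : ℝ) : ℂ) • σ₂)
            ((lam : ℂ) • a₁ + ((1 - lam : ℝ) : ℂ) • a₂) ≤
          lam * gammaF F ρ₁ σ₁ a₁ + (1 - lam) * gammaF F ρ₂ σ₂ a₂ :=
  gammaF_jointly_convex_general F hmono hhom
end
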